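/- Let K be a field and let f, g ∈ K⟨x,y⟩ be two nonzero bihomogeneous polynomials (each homogeneous with respect to x and with respect to y separately). Then either f and g generate a free subalgebra of K⟨x,y⟩ (i.e., the algebra homomorphism from the free associative algebra K⟨u,v⟩ to K⟨x,y⟩ sending u ↦ f, v ↦ g is injective), or, up to multiplicative constants, both f and g are powers of one and the same bihomogeneous element of K⟨x,y⟩ (i.e., there exist a bihomogeneous w ∈ K⟨x,y⟩, scalars α, β ∈ K∖{0}, and integers k, l ≥ 0 with f = α·w^k and g = β·w^l). -/

import Mathlib

open MonoidAlgebra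

noncomputable section

/-- The free associative algebra `K⟨x,y⟩` (also serving as `K⟨u,v⟩`);
`x` is letter `0`, `y` is letter `1`. -/
abbrev FA2 (K : Type) [Field K] := MonoidAlgebra K (FreeMonoid (Fin 2))

variable (K : Type) [Field K]

/-- The generators `x = Xw 0`, `y = Xw 1`. -/
def Xw (i : Fin 2) : FA2 K := MonoidAlgebra.of K (FreeMonoid (Fin 2)) (FreeMonoid.of i)

/-- The algebra homomorphism `K⟨u,v⟩ → K⟨x,y⟩` sending `u ↦ f 0`, `v ↦ f 1`. -/
def subst2 (f : Fin 2 → FA2 K) : FA2 K →ₐ[K] FA2 K :=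
  MonoidAlgebra.lift K (FA2 K) (FreeMonoid (Fin 2)) (FreeMonoid.lift f)

/-- A polynomial of `K⟨x,y⟩` is bihomogeneous if all its monomials have the same number of
occurrences of `x` and the same number of occurrences of `y`. -/
def IsBihom (p : FA2 K) : Prop :=
  ∃ a b : ℕ, ∀ w ∈ p.coeff.support,
    (FreeMonoid.toList w).count 0 = a ∧ (FreeMonoid.toList w).count 1 = b

/-!
A relation between `f` and `g` drives a Euclidean algorithm. Let `deg g ≤ deg f`, neither being
constant. Splitting a relation `P(f, g) = 0` by the first letter of its words, and passing to a
shorter relation when necessary, gives `f h₁ = g h₂` with `h₁ ≠ 0`. Taking left quotients of both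
sides by the words of length `deg g` then shows `f = g c` with `c` bihomogeneous. As
`u ↦ uv, v ↦ u` is injective, `(g, c)` still satisfies a relation, and induction on
`deg f + deg g` stops when one of the two polynomials is a constant.
-/

namespace FreeMonoid

variable {α : Type*}

theorem eq_of_mul_eq_mul_of_length_eq {a b c d : FreeMonoid α} (h : a * b = c * d)
    (hl : a.length = c.length) : a = c :=
  toList.injective (List.append_inj_left (congrArg toList h) hl)

theorem exists_mul_of_le_length {m : ℕ} {z : FreeMonoid α} (h : m ≤ z.length) :
    ∃ a b : FreeMonoid α, z = a * b ∧ a.length = m :=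
  ⟨ofList (z.toList.take m), ofList (z.toList.drop m), toList.injective (by simp),
    by simpa [FreeMonoid.length] using h⟩

theorem of_mul_eq_of_mul_iff {a b : α} {x y : FreeMonoid α} :
    of a * x = of b * y ↔ a = b ∧ x = y := by
  rw [← toList.injective.eq_iff, toList_of_mul, toList_of_mul, List.cons.injEq,
    toList.injective.eq_iff]

theorem of_mul_ne_one (a : α) (x : FreeMonoid α) : of a * x ≠ 1 := by
  simp

end FreeMonoid

lemma MonoidAlgebra.single_one_mul_eq_smul {k M : Type*} [Semiring k] [Monoid M] (r : k)
    (x : MonoidAlgebra k M) : single 1 r * x = r • x := by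
  ext
  simp [coeff_single_one_mul]

namespace FreeMonoidAlgebra

open FreeMonoid

variable {k α : Type*}

section Semiring

variable [Semiring k]

lemma coeff_mul_one (p q : MonoidAlgebra k (FreeMonoid α)) :
    (p * q).coeff 1 = p.coeff 1 * q.coeff 1 := by
  rw [coeff_mul_antidiag p q 1 {(1, 1)} (by simp [Prod.ext_iff])]
  simp

def leftQuot (w : FreeMonoid α) (p : MonoidAlgebra k (FreeMonoid α)) :
    MonoidAlgebra k (FreeMonoid α) :=
  comapDomain (w * ·) (mul_right_injective w) p

@[simp]
lemma coeff_leftQuot (w u : FreeMonoid α) (p : MonoidAlgebra k (FreeMonoid α)) :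
    (leftQuot w p).coeff u = p.coeff (w * u) := by
  simp [leftQuot]

lemma sup_length_leftQuot_lt {p : MonoidAlgebra k (FreeMonoid α)} {a : α}
    (h : leftQuot (of a) p ≠ 0) :
    (leftQuot (of a) p).coeff.support.sup length < p.coeff.support.sup length := by
  obtain ⟨u, hu⟩ := Finsupp.support_nonempty_iff.mpr (mt coeff_eq_zero.mp h)
  have hlt : ∀ v ∈ (leftQuot (of a) p).coeff.support, v.length < p.coeff.support.sup length :=
    fun v hv => lt_of_lt_of_le (by simp [length_mul] : v.length < (of a * v).length)
      (Finset.le_sup (f := length) (by simpa using hv))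
  exact (Finset.sup_lt_iff (Nat.zero_le _ |>.trans_lt (hlt u hu))).mpr hlt

def IsHomogeneousOfDegree (n : ℕ) (p : MonoidAlgebra k (FreeMonoid α)) : Prop :=
  ∀ w ∈ p.coeff.support, w.length = n

lemma isHomogeneousOfDegree_single (w : FreeMonoid α) (r : k) :
    IsHomogeneousOfDegree w.length (single w r) := fun v hv => by
  rw [Finset.mem_singleton.mp (Finsupp.support_single_subset hv)]

lemma isHomogeneousOfDegree_leftQuot {n : ℕ} {p : MonoidAlgebra k (FreeMonoid α)}
    (hp : IsHomogeneousOfDegree n p) (w : FreeMonoid α) :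
    IsHomogeneousOfDegree (n - w.length) (leftQuot w p) := by
  intro u hu
  have := hp (w * u) (by simpa using hu)
  rw [length_mul] at this
  omega

namespace IsHomogeneousOfDegree

variable {n : ℕ} {p : MonoidAlgebra k (FreeMonoid α)}

lemma coeff_eq_zero (hp : IsHomogeneousOfDegree n p) {w : FreeMonoid α} (hw : w.length ≠ n) :
    p.coeff w = 0 :=
  Finsupp.notMem_support_iff.mp fun h => hw (hp w h)

lemma smul (hp : IsHomogeneousOfDegree n p) (c : k) : IsHomogeneousOfDegree n (c • p) :=
  fun w hw => hp w (Finsupp.support_smul hw)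

lemma eq_single_one (hp : IsHomogeneousOfDegree 0 p) : p = single 1 (p.coeff 1) := by
  ext w
  by_cases hw : w = 1
  · simp [hw]
  · rw [hp.coeff_eq_zero (mt length_eq_zero.mp hw), coeff_single, Finsupp.single_eq_of_ne hw]

lemma coeff_mul_of_length_lt (hp : IsHomogeneousOfDegree n p) (q : MonoidAlgebra k (FreeMonoid α))
    {z : FreeMonoid α} (hz : z.length < n) : (p * q).coeff z = 0 := by
  classical
  rw [coeff_mul]
  refine Finset.sum_eq_zero fun a ha => Finset.sum_eq_zero fun b _ => if_neg fun hab => ?_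
  have := congrArg length hab
  rw [length_mul, hp a ha] at this
  omega

lemma coeff_mul_mul (hp : IsHomogeneousOfDegree n p) (q : MonoidAlgebra k (FreeMonoid α))
    {a : FreeMonoid α} (ha : a.length = n) (b : FreeMonoid α) :
    (p * q).coeff (a * b) = p.coeff a * q.coeff b := by
  classical
  rw [coeff_mul, Finsupp.sum_eq_single a, Finsupp.sum_eq_single b, if_pos rfl]
  · exact fun b' _ hb => if_neg fun h => hb (mul_left_cancel h)
  · simp
  · refine fun a' ha' hne => Finset.sum_eq_zero fun b' _ => if_neg fun h => hne ?_
    exact eq_of_mul_eq_mul_of_length_eq h (by rw [hp a' (Finsupp.mem_support_iff.mpr ha'), ha])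
  · simp

lemma leftQuot_mul (hp : IsHomogeneousOfDegree n p) (q : MonoidAlgebra k (FreeMonoid α))
    {w : FreeMonoid α} (hw : w.length ≤ n) : leftQuot w (p * q) = leftQuot w p * q := by
  ext u
  rw [coeff_leftQuot]
  rcases lt_or_ge u.length (n - w.length) with hu | hu
  · rw [hp.coeff_mul_of_length_lt _ (by rw [length_mul]; omega),
      (isHomogeneousOfDegree_leftQuot hp w).coeff_mul_of_length_lt _ hu]
  · obtain ⟨a, b, rfl, ha⟩ := exists_mul_of_le_length hu
    rw [← mul_assoc, hp.coeff_mul_mul _ (by rw [length_mul]; omega),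
      (isHomogeneousOfDegree_leftQuot hp w).coeff_mul_mul _ ha, coeff_leftQuot]

lemma leftQuot_eq_single (hp : IsHomogeneousOfDegree n p) {w : FreeMonoid α}
    (hw : w.length = n) : leftQuot w p = single 1 (p.coeff w) := by
  have h0 : IsHomogeneousOfDegree 0 (leftQuot w p) := by
    simpa [hw] using isHomogeneousOfDegree_leftQuot hp w
  rw [h0.eq_single_one, coeff_leftQuot, mul_one]

end IsHomogeneousOfDegree

lemma eq_single_one_add_sum_leftQuot [Fintype α] (p : MonoidAlgebra k (FreeMonoid α)) :
    p = single 1 (p.coeff 1) + ∑ i : α, single (of i) 1 * leftQuot (of i) p := by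
  classical
  ext z
  rw [coeff_add, Finsupp.add_apply, coeff_sum, Finset.sum_apply']
  induction z using FreeMonoid.casesOn with
  | one => simp
  | of_mul i t =>
    have hterm (j : α) : (single (of j) 1 * leftQuot (of j) p).coeff (of i * t) =
        if j = i then p.coeff (of i * t) else 0 := by
      rw [(isHomogeneousOfDegree_single (of j) (1 : k)).coeff_mul_mul _ (a := of i) rfl,
        coeff_leftQuot, coeff_single, Finsupp.single_apply, FreeMonoid.of_injective.eq_iff]
      split_ifs with h <;> simp [h]
    simp [hterm]

end Semiring

section Field

variable [Field k]

theorem IsHomogeneousOfDegree.eq_mul_of_mul_eq_mul {m n : ℕ}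
    {f g h₁ h₂ : MonoidAlgebra k (FreeMonoid α)} (hf : IsHomogeneousOfDegree n f)
    (hg : IsHomogeneousOfDegree m g) (hmn : m ≤ n) (hh₁ : h₁ ≠ 0) (heq : f * h₁ = g * h₂)
    {w₀ : FreeMonoid α} (hw₀ : g.coeff w₀ ≠ 0) :
    f = g * ((g.coeff w₀)⁻¹ • leftQuot w₀ f) := by
  have hw₀m : w₀.length = m := hg w₀ (Finsupp.mem_support_iff.mpr hw₀)
  have hquot (w : FreeMonoid α) (hw : w.length = m) : leftQuot w f * h₁ = g.coeff w • h₂ := by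
    have := congrArg (leftQuot w) heq
    rwa [hf.leftQuot_mul _ (hw ▸ hmn), hg.leftQuot_mul _ hw.le, hg.leftQuot_eq_single hw,
      single_one_mul_eq_smul] at this
  have hprop (w : FreeMonoid α) (hw : w.length = m) :
      leftQuot w f = (g.coeff w * (g.coeff w₀)⁻¹) • leftQuot w₀ f := by
    refine mul_right_cancel₀ hh₁ ?_
    rw [hquot w hw, smul_mul_assoc, hquot w₀ hw₀m, smul_smul, mul_assoc, inv_mul_cancel₀ hw₀,
      mul_one]
  ext z
  rcases lt_or_ge z.length m with hz | hz
  · rw [hg.coeff_mul_of_length_lt _ hz, hf.coeff_eq_zero (by omega)]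
  · obtain ⟨a, b, rfl, ha⟩ := exists_mul_of_le_length hz
    rw [hg.coeff_mul_mul _ ha, ← coeff_leftQuot, hprop a ha]
    simp only [coeff_smul_apply, smul_eq_mul]
    ring

end Field

end FreeMonoidAlgebra

open FreeMonoidAlgebra FreeMonoid Function

variable {K}

lemma Xw_eq_single (i : Fin 2) : Xw K i = single (of i) 1 :=
  of_apply ..

@[simp]
lemma subst2_Xw (F : Fin 2 → FA2 K) (i : Fin 2) : subst2 K F (Xw K i) = F i := by
  simp [subst2, Xw]

@[simp]
lemma subst2_single_one (F : Fin 2 → FA2 K) (r : K) : subst2 K F (single 1 r) = single 1 r :=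
  (subst2 K F).commutes r

lemma subst2_ext {φ ψ : FA2 K →ₐ[K] FA2 K} (h : ∀ i, φ (Xw K i) = ψ (Xw K i)) : φ = ψ :=
  algHom_ext' (FreeMonoid.hom_eq h) (Subsingleton.elim _ _)

lemma subst2_comp_subst2 (F G : Fin 2 → FA2 K) :
    (subst2 K F).comp (subst2 K G) = subst2 K fun i => subst2 K F (G i) :=
  subst2_ext fun i => by simp

lemma injective_subst2_single {A : Fin 2 → FreeMonoid (Fin 2)} (hA : Injective (lift A)) :
    Injective (subst2 K fun i => single (A i) 1) := by
  have : subst2 K (fun i => single (A i) 1) = mapDomainAlgHom K K (lift A) :=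
    subst2_ext fun i => by
      rw [subst2_Xw, Xw_eq_single, mapDomainAlgHom_apply, mapDomain_single, lift_eval_of]
  rw [this]
  exact mapDomain_injective hA

lemma injective_lift_swap : Injective (lift ![of (1 : Fin 2), of 0]) := by
  have h : (lift ![of (1 : Fin 2), of 0]).comp (lift ![of 1, of 0]) = MonoidHom.id _ :=
    FreeMonoid.hom_eq fun i => by fin_cases i <;> rfl
  exact LeftInverse.injective (g := lift ![of 1, of 0]) fun x => DFunLike.congr_fun h x

-- `{xy, x}` is not a prefix code, but every image word starts with `x`, so after a common
-- leading `x` the next letter tells `xy` from `x`.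
lemma injective_lift_xy_x : Injective (lift ![of (0 : Fin 2) * of 1, of 0]) := by
  set c := lift ![of (0 : Fin 2) * of 1, of 0]
  have hc (i : Fin 2) (t : FreeMonoid (Fin 2)) : ∃ s, c (of i * t) = of 0 * s := by
    fin_cases i
    · exact ⟨of 1 * c t, by simp [c, mul_assoc]⟩
    · exact ⟨c t, by simp [c]⟩
  have hne (t s : FreeMonoid (Fin 2)) : c t ≠ of 1 * s := by
    induction t using FreeMonoid.casesOn with
    | one => exact (of_mul_ne_one 1 s).symm
    | of_mul i t =>
      obtain ⟨s', hs'⟩ := hc i t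
      simp [hs', of_mul_eq_of_mul_iff]
  intro v
  induction v using FreeMonoid.inductionOn' with
  | one =>
    intro w h
    induction w using FreeMonoid.casesOn with
    | one => rfl
    | of_mul j w =>
      obtain ⟨s, hs⟩ := hc j w
      exact absurd (h.trans hs).symm (of_mul_ne_one 0 s)
  | of_mul i v ih =>
    intro w h
    induction w using FreeMonoid.casesOn with
    | one =>
      obtain ⟨s, hs⟩ := hc i v
      exact absurd (hs.symm.trans h) (of_mul_ne_one 0 s)
    | of_mul j w =>
      fin_cases i <;> fin_cases j <;> simp [c, mul_assoc, of_mul_eq_of_mul_iff] at h ⊢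
      · exact ih h
      · exact hne _ _ h.symm
      · exact hne _ _ h
      · exact ih h

lemma injective_subst2_of_injective_swap {f g : FA2 K} (h : Injective (subst2 K ![g, f])) :
    Injective (subst2 K ![f, g]) := by
  have : subst2 K ![f, g] =
      (subst2 K ![g, f]).comp (subst2 K fun i => single (![of 1, of 0] i) 1) := by
    rw [subst2_comp_subst2]
    congr 1
    funext i
    fin_cases i <;> simp [← Xw_eq_single]
  rw [this]
  exact h.comp (injective_subst2_single injective_lift_swap)

lemma injective_subst2_mul_of_injective {g c : FA2 K} (h : Injective (subst2 K ![g, c])) :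
    Injective (subst2 K ![g * c, g]) := by
  have : subst2 K ![g * c, g] =
      (subst2 K ![g, c]).comp (subst2 K fun i => single (![of 0 * of 1, of 0] i) 1) := by
    have hxy : (single (of 0 * of 1) 1 : FA2 K) = Xw K 0 * Xw K 1 := by
      rw [Xw_eq_single, Xw_eq_single, single_mul_single, mul_one]
    rw [subst2_comp_subst2]
    congr 1
    funext i
    fin_cases i <;> simp [hxy, ← Xw_eq_single]
  rw [this]
  exact h.comp (injective_subst2_single injective_lift_xy_x)

theorem exists_mul_eq_mul_of_not_injective {f g : FA2 K} (hg : g ≠ 0) (hf1 : f.coeff 1 = 0)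
    (hg1 : g.coeff 1 = 0) (h : ¬Injective (subst2 K ![f, g])) :
    ∃ h₁ h₂ : FA2 K, h₁ ≠ 0 ∧ f * h₁ = g * h₂ := by
  obtain ⟨P, hP, hP0⟩ : ∃ P, subst2 K ![f, g] P = 0 ∧ P ≠ 0 := by
    simpa [injective_iff_map_eq_zero] using h
  induction hN : P.coeff.support.sup length using Nat.strong_induction_on generalizing P with
  | _ N ih =>
  have hdecomp := eq_single_one_add_sum_leftQuot P
  have hrel : single 1 (P.coeff 1) + (f * subst2 K ![f, g] (leftQuot (of 0) P) +
      g * subst2 K ![f, g] (leftQuot (of 1) P)) = 0 := by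
    have := congrArg (subst2 K ![f, g]) hdecomp
    simp only [map_add, map_mul, Fin.sum_univ_two, ← Xw_eq_single, subst2_Xw,
      subst2_single_one] at this
    simpa [hP] using this.symm
  have hc : P.coeff 1 = 0 := by
    simpa [coeff_mul_one, hf1, hg1] using congrArg (fun Q => Q.coeff 1) hrel
  rw [hc, single_zero, zero_add] at hrel
  by_cases h0 : subst2 K ![f, g] (leftQuot (of 0) P) = 0
  · have h1 : subst2 K ![f, g] (leftQuot (of 1) P) = 0 := by
      simpa [h0, hg] using hrel
    obtain ⟨i, hi⟩ : ∃ i, leftQuot (of i) P ≠ 0 := by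
      by_contra! hall
      simp [hc, hall] at hdecomp
      exact hP0 hdecomp
    refine ih _ (hN ▸ sup_length_leftQuot_lt hi) _ ?_ hi rfl
    fin_cases i
    exacts [h0, h1]
  · exact ⟨_, -subst2 K ![f, g] (leftQuot (of 1) P), h0,
      by rw [mul_neg, eq_neg_iff_add_eq_zero, hrel]⟩

lemma List.length_eq_count_zero_add_count_one (l : List (Fin 2)) :
    l.length = l.count 0 + l.count 1 := by
  induction l with
  | nil => rfl
  | cons i t ih =>
    fin_cases i <;> simp [ih] <;> omega

namespace IsBihom

variable {p : FA2 K}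

lemma exists_isHomogeneousOfDegree (hp : IsBihom K p) : ∃ n, IsHomogeneousOfDegree n p := by
  obtain ⟨a, b, h⟩ := hp
  exact ⟨a + b, fun w hw => by
    rw [length, List.length_eq_count_zero_add_count_one, (h w hw).1, (h w hw).2]⟩

lemma leftQuot (hp : IsBihom K p) (w : FreeMonoid (Fin 2)) : IsBihom K (leftQuot w p) := by
  obtain ⟨a, b, h⟩ := hp
  refine ⟨a - w.toList.count 0, b - w.toList.count 1, fun u hu => ?_⟩
  have := h (w * u) (by simpa using hu)
  simp only [toList_mul, List.count_append] at this
  omega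

lemma smul (hp : IsBihom K p) (c : K) : IsBihom K (c • p) := by
  obtain ⟨a, b, h⟩ := hp
  exact ⟨a, b, fun w hw => h w (Finsupp.support_smul hw)⟩

end IsBihom

def ArePowersUpToScalar (f g : FA2 K) : Prop :=
  ∃ (w : FA2 K) (α β : K) (k l : ℕ), IsBihom K w ∧ α ≠ 0 ∧ β ≠ 0 ∧
    f = α • w ^ k ∧ g = β • w ^ l

namespace ArePowersUpToScalar

variable {f g : FA2 K}

lemma symm (h : ArePowersUpToScalar f g) : ArePowersUpToScalar g f := by
  obtain ⟨w, α, β, k, l, hw, hα, hβ, hf, hg⟩ := h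
  exact ⟨w, β, α, l, k, hw, hβ, hα, hg, hf⟩

lemma of_isHomogeneousOfDegree_zero (hf : f ≠ 0) (hf0 : IsHomogeneousOfDegree 0 f)
    (hg : IsBihom K g) : ArePowersUpToScalar f g := by
  have hf1 : f.coeff 1 ≠ 0 := fun h => hf (by rw [hf0.eq_single_one, h, single_zero])
  refine ⟨g, f.coeff 1, 1, 0, 1, hg, hf1, one_ne_zero, ?_, by rw [pow_one, one_smul]⟩
  rw [pow_zero, ← single_one_mul_eq_smul, mul_one, ← hf0.eq_single_one]

lemma mul_left {c : FA2 K} (h : ArePowersUpToScalar g c) : ArePowersUpToScalar (g * c) g := by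
  obtain ⟨w, α, β, k, l, hw, hα, hβ, hg, hc⟩ := h
  refine ⟨w, α * β, α, k + l, k, hw, mul_ne_zero hα hβ, hα, ?_, hg⟩
  rw [hg, hc, smul_mul_smul_comm, pow_add]

end ArePowersUpToScalar

theorem arePowersUpToScalar_of_not_injective {f g : FA2 K} (hf : f ≠ 0) (hg : g ≠ 0)
    (hfb : IsBihom K f) (hgb : IsBihom K g) (h : ¬Injective (subst2 K ![f, g])) :
    ArePowersUpToScalar f g := by
  obtain ⟨n₁, hfn⟩ := hfb.exists_isHomogeneousOfDegree
  obtain ⟨n₂, hgn⟩ := hgb.exists_isHomogeneousOfDegree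
  induction hN : n₁ + n₂ using Nat.strong_induction_on generalizing f g n₁ n₂ with
  | _ N ih =>
  wlog hle : n₂ ≤ n₁ generalizing f g n₁ n₂
  · exact (this hg hf hgb hfb (mt injective_subst2_of_injective_swap h) n₂ hgn n₁ hfn (by omega)
      (by omega)).symm
  obtain rfl | hn₂ := Nat.eq_zero_or_pos n₂
  · exact (ArePowersUpToScalar.of_isHomogeneousOfDegree_zero hg hgn hfb).symm
  obtain ⟨h₁, h₂, hh₁, heq⟩ := exists_mul_eq_mul_of_not_injective hg
    (hfn.coeff_eq_zero (by rw [length_one]; omega))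
    (hgn.coeff_eq_zero (by rw [length_one]; omega)) h
  obtain ⟨w₀, hw₀⟩ := Finsupp.support_nonempty_iff.mpr (mt coeff_eq_zero.mp hg)
  have hw₀n : w₀.length = n₂ := hgn w₀ hw₀
  rw [Finsupp.mem_support_iff] at hw₀
  set c := (g.coeff w₀)⁻¹ • leftQuot w₀ f
  have hfc : f = g * c := hfn.eq_mul_of_mul_eq_mul hgn hle hh₁ heq hw₀
  have hc : c ≠ 0 := fun hc => hf (by rw [hfc, hc, mul_zero])
  rw [hfc] at h ⊢
  exact (ih n₁ (by omega) hg hc hgb ((hfb.leftQuot w₀).smul _)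
    (mt injective_subst2_mul_of_injective h) n₂ hgn (n₁ - n₂)
    (hw₀n ▸ (isHomogeneousOfDegree_leftQuot hfn w₀).smul _) (by omega)).mul_left

variable (K)

/-- Two nonzero bihomogeneous polynomials `f, g ∈ K⟨x,y⟩` either generate a free subalgebra
(the homomorphism `K⟨u,v⟩ → K⟨x,y⟩`, `u ↦ f`, `v ↦ g`, is injective), or, up to
multiplicative constants, both are powers of one and the same bihomogeneous element. -/
theorem bihom_free_or_powers (f g : FA2 K) (hf : f ≠ 0) (hg : g ≠ 0)
    (hfh : IsBihom K f) (hgh : IsBihom K g) :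
    Function.Injective (subst2 K ![f, g]) ∨
    ∃ (w : FA2 K) (α β : K) (k l : ℕ), IsBihom K w ∧ α ≠ 0 ∧ β ≠ 0 ∧
      f = α • w ^ k ∧ g = β • w ^ l :=
  or_iff_not_imp_left.mpr (arePowersUpToScalar_of_not_injective hf hg hfh hgh)
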